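/- arXiv:1210.5121 — 5 statements merged into one kernel-verified Lean document; each statement's English description precedes it below -/
import Mathlib

section
/- If k1 and k2 are functions on finite configurations satisfying |k_i(η)| ≤ M_i · C_i^{|η|} · (|η|!)^{δ_i} for constants C_i > 0, δ_i ≥ 0, then their Ruelle convolution satisfies |(k1 * k2)(η)| ≤ M_1 M_2 · (C_1 + C_2)^{|η|} · (|η|!)^{δ} where δ = max{δ_1, δ_2}. -/
/-! Bound the convolution termwise. The factorial weights combine because
`|ξ|! · |η \ ξ|! ≤ |η|!` (a binomial coefficient is at least `1`), and the geometric weights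
then sum over `ξ ⊆ η` to `(C1 + C2) ^ |η|` by the binomial theorem. -/

open Finset

variable {X : Type*} [DecidableEq X]

/-- Ruelle convolution of functions on finite configurations. -/
noncomputable def conv (G1 G2 : Finset X → ℝ) (η : Finset X) : ℝ :=
  ∑ ξ ∈ η.powerset, G1 ξ * G2 (η \ ξ)

/-- The unit `1^*` for the Ruelle convolution. -/
noncomputable def oneStar (η : Finset X) : ℝ := if η = ∅ then 1 else 0

/-- n-fold Ruelle convolution power. -/
noncomputable def convPow (k : Finset X → ℝ) : ℕ → Finset X → ℝ
  | 0 => oneStar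
  | n + 1 => conv k (convPow k n)

/-- `exp^* u`; a pointwise finite sum when `u ∅ = 0`, since then
`u^{*n}(η) = 0` for `n > |η|`. -/
noncomputable def expStar (u : Finset X → ℝ) (η : Finset X) : ℝ :=
  ∑ n ∈ Finset.range (η.card + 1), ((n.factorial : ℝ))⁻¹ * convPow u n η

/-- `ln^* k`; a pointwise finite sum when `k ∅ = 1`. -/
noncomputable def lnStar (k : Finset X → ℝ) (η : Finset X) : ℝ :=
  ∑ n ∈ Finset.Icc 1 η.card,
    ((-1 : ℝ) ^ (n - 1) / n) * convPow (fun ξ => k ξ - oneStar ξ) n η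

theorem factorial_rpow_mul_factorial_rpow_le (a b : ℕ) {δ1 δ2 : ℝ} (hδ : 0 ≤ max δ1 δ2) :
    (a.factorial : ℝ) ^ δ1 * (b.factorial : ℝ) ^ δ2 ≤ ((a + b).factorial : ℝ) ^ (max δ1 δ2) := by
  have one_le_factorial (n : ℕ) : (1 : ℝ) ≤ n.factorial := by exact_mod_cast n.factorial_pos
  calc (a.factorial : ℝ) ^ δ1 * (b.factorial : ℝ) ^ δ2
      ≤ (a.factorial : ℝ) ^ (max δ1 δ2) * (b.factorial : ℝ) ^ (max δ1 δ2) := by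
        gcongr
        · exact one_le_factorial a
        · exact le_max_left _ _
        · exact one_le_factorial b
        · exact le_max_right _ _
    _ = ((a.factorial * b.factorial : ℕ) : ℝ) ^ (max δ1 δ2) := by
        rw [Nat.cast_mul, Real.mul_rpow (by positivity) (by positivity)]
    _ ≤ ((a + b).factorial : ℝ) ^ (max δ1 δ2) := by
        gcongr
        exact Nat.le_of_dvd (Nat.factorial_pos _) (Nat.factorial_mul_factorial_dvd_factorial_add a b)

theorem sum_powerset_pow_mul_pow_sdiff {R : Type*} [CommSemiring R] (a b : R) (η : Finset X) :
    ∑ ξ ∈ η.powerset, a ^ ξ.card * b ^ (η \ ξ).card = (a + b) ^ η.card := by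
  rw [← sum_pow_mul_eq_add_pow]
  refine sum_congr rfl fun ξ hξ => ?_
  rw [card_sdiff_of_subset (mem_powerset.mp hξ)]

theorem abs_conv_le_conv {k1 k2 w1 w2 : Finset X → ℝ} (h1 : ∀ η, |k1 η| ≤ w1 η)
    (h2 : ∀ η, |k2 η| ≤ w2 η) (η : Finset X) : |conv k1 k2 η| ≤ conv w1 w2 η :=
  (abs_sum_le_sum_abs _ _).trans <| sum_le_sum fun ξ _ => by
    rw [abs_mul]
    exact mul_le_mul (h1 ξ) (h2 _) (abs_nonneg _) ((abs_nonneg _).trans (h1 ξ))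

theorem conv_factorial_growth_le {C1 C2 δ1 δ2 M1 M2 : ℝ} (hM1 : 0 ≤ M1) (hM2 : 0 ≤ M2)
    (hC1 : 0 ≤ C1) (hC2 : 0 ≤ C2) (hδ : 0 ≤ max δ1 δ2) (η : Finset X) :
    conv (fun ξ => M1 * C1 ^ ξ.card * (ξ.card.factorial : ℝ) ^ δ1)
        (fun ξ => M2 * C2 ^ ξ.card * (ξ.card.factorial : ℝ) ^ δ2) η ≤
      M1 * M2 * (C1 + C2) ^ η.card * (η.card.factorial : ℝ) ^ (max δ1 δ2) := by
  rw [← sum_powerset_pow_mul_pow_sdiff, mul_sum, sum_mul]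
  refine sum_le_sum fun ξ hξ => ?_
  have hcard : (η \ ξ).card + ξ.card = η.card := card_sdiff_add_card_eq_card (mem_powerset.mp hξ)
  calc M1 * C1 ^ ξ.card * (ξ.card.factorial : ℝ) ^ δ1 *
        (M2 * C2 ^ (η \ ξ).card * ((η \ ξ).card.factorial : ℝ) ^ δ2)
      = M1 * M2 * (C1 ^ ξ.card * C2 ^ (η \ ξ).card) *
          ((ξ.card.factorial : ℝ) ^ δ1 * ((η \ ξ).card.factorial : ℝ) ^ δ2) := by ring
    _ ≤ M1 * M2 * (C1 ^ ξ.card * C2 ^ (η \ ξ).card) * (η.card.factorial : ℝ) ^ (max δ1 δ2) := by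
        gcongr
        rw [← hcard, add_comm]
        exact factorial_rpow_mul_factorial_rpow_le _ _ hδ

theorem conv_young_general (k1 k2 : Finset X → ℝ) (C1 C2 δ1 δ2 M1 M2 : ℝ)
    (hC1 : 0 < C1) (hC2 : 0 < C2) (hδ1 : 0 ≤ δ1)
    (h1 : ∀ η : Finset X, |k1 η| ≤ M1 * C1 ^ η.card * (η.card.factorial : ℝ) ^ δ1)
    (h2 : ∀ η : Finset X, |k2 η| ≤ M2 * C2 ^ η.card * (η.card.factorial : ℝ) ^ δ2) :
    ∀ η : Finset X, |conv k1 k2 η| ≤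
      M1 * M2 * (C1 + C2) ^ η.card * (η.card.factorial : ℝ) ^ (max δ1 δ2) := by
  intro η
  have hM1 : 0 ≤ M1 := by simpa using (abs_nonneg _).trans (h1 ∅)
  have hM2 : 0 ≤ M2 := by simpa using (abs_nonneg _).trans (h2 ∅)
  exact (abs_conv_le_conv h1 h2 η).trans
    (conv_factorial_growth_le hM1 hM2 hC1.le hC2.le (le_max_of_le_left hδ1) η)

theorem conv_young (k1 k2 : Finset X → ℝ) (C1 C2 δ1 δ2 M1 M2 : ℝ)
    (hC1 : 0 < C1) (hC2 : 0 < C2) (hδ1 : 0 ≤ δ1) (hδ2 : 0 ≤ δ2)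
    (h1 : ∀ η : Finset X, |k1 η| ≤ M1 * C1 ^ η.card * (η.card.factorial : ℝ) ^ δ1)
    (h2 : ∀ η : Finset X, |k2 η| ≤ M2 * C2 ^ η.card * (η.card.factorial : ℝ) ^ δ2) :
    ∀ η : Finset X, |conv k1 k2 η| ≤
      M1 * M2 * (C1 + C2) ^ η.card * (η.card.factorial : ℝ) ^ (max δ1 δ2) :=
  conv_young_general k1 k2 C1 C2 δ1 δ2 M1 M2 hC1 hC2 hδ1 h1 h2
end

section
/- If δ ≥ 1, C_1 ≠ C_2, and |k_i(η)| ≤ M_i C_i^{|η|} (|η|!)^{δ_i} with δ_i ≤ δ, then |(k1 * k2)(η)| ≤ (C̄/|C_1 − C_2|) · M_1 M_2 · C̄^{|η|} (|η|!)^δ for all finite configurations η, where C̄ = max{C_1, C_2}. -/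
open Finset

variable {X : Type*} [DecidableEq X]

/- Grouping the subsets `ξ ⊆ η` by cardinality bounds `|(k₁ * k₂)(η)|` by the binomial sum
`M₁ M₂ ∑ⱼ (n choose j) C₁^j C₂^(n-j) (j!)^δ₁ ((n-j)!)^δ₂`. Since `δ ≥ 1`, the binomial
coefficient is absorbed into the factorials:
`(n choose j) (j!)^δ₁ ((n-j)!)^δ₂ ≤ ((n choose j) j! (n-j)!)^δ = (n!)^δ`.
What is left is the geometric sum `∑ⱼ C₁^j C₂^(n-j) = (C₁^(n+1) - C₂^(n+1)) / (C₁ - C₂)`,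
which is at most `C̄^(n+1) / |C₁ - C₂|`. -/

open Nat in
lemma choose_mul_factorial_rpow_mul_le {n j : ℕ} (hj : j ≤ n) {δ₁ δ₂ δ : ℝ}
    (hδ : 1 ≤ δ) (hδ₁ : δ₁ ≤ δ) (hδ₂ : δ₂ ≤ δ) :
    (n.choose j : ℝ) * ((j ! : ℝ) ^ δ₁ * ((n - j)! : ℝ) ^ δ₂) ≤ (n ! : ℝ) ^ δ := by
  have one_le_cast {m : ℕ} (hm : 0 < m) : (1 : ℝ) ≤ m := by exact_mod_cast hm
  calc (n.choose j : ℝ) * ((j ! : ℝ) ^ δ₁ * ((n - j)! : ℝ) ^ δ₂)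
      ≤ (n.choose j : ℝ) ^ δ * ((j ! : ℝ) ^ δ * ((n - j)! : ℝ) ^ δ) := by
        gcongr ?_ * (?_ * ?_)
        · exact Real.self_le_rpow_of_one_le (one_le_cast (choose_pos hj)) hδ
        · exact Real.rpow_le_rpow_of_exponent_le (one_le_cast (factorial_pos _)) hδ₁
        · exact Real.rpow_le_rpow_of_exponent_le (one_le_cast (factorial_pos _)) hδ₂
    _ = ((n.choose j * j ! * (n - j)! : ℕ) : ℝ) ^ δ := by
        push_cast
        rw [Real.mul_rpow (by positivity) (by positivity),
          Real.mul_rpow (by positivity) (by positivity), mul_assoc]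
    _ = (n ! : ℝ) ^ δ := by rw [choose_mul_factorial_mul_factorial hj]

lemma sum_pow_mul_pow_le_max_pow_div {a b : ℝ} (ha : 0 ≤ a) (hb : 0 ≤ b) (hab : a ≠ b) (n : ℕ) :
    ∑ j ∈ range (n + 1), a ^ j * b ^ (n - j) ≤ max a b ^ (n + 1) / |a - b| := by
  have hsum : ∑ j ∈ range (n + 1), a ^ j * b ^ (n - j) = (a ^ (n + 1) - b ^ (n + 1)) / (a - b) := by
    rw [eq_div_iff (sub_ne_zero.mpr hab), ← geom_sum₂_mul]
    rfl
  have hdiff : |a ^ (n + 1) - b ^ (n + 1)| ≤ max a b ^ (n + 1) :=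
    abs_sub_le_of_nonneg_of_le (by positivity) (pow_le_pow_left₀ ha (le_max_left a b) _)
      (by positivity) (pow_le_pow_left₀ hb (le_max_right a b) _)
  rw [hsum]
  refine (le_abs_self _).trans ?_
  rw [abs_div]
  gcongr

lemma abs_conv_le_sum_choose {k₁ k₂ : Finset X → ℝ} {f₁ f₂ : ℕ → ℝ} (hf₁ : ∀ j, 0 ≤ f₁ j)
    (hk₁ : ∀ ξ, |k₁ ξ| ≤ f₁ ξ.card) (hk₂ : ∀ ξ, |k₂ ξ| ≤ f₂ ξ.card) (η : Finset X) :
    |conv k₁ k₂ η| ≤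
      ∑ j ∈ range (η.card + 1), (η.card.choose j : ℝ) * (f₁ j * f₂ (η.card - j)) := by
  calc |conv k₁ k₂ η|
      ≤ ∑ ξ ∈ η.powerset, |k₁ ξ| * |k₂ (η \ ξ)| := by
        simpa only [conv, abs_mul] using
          abs_sum_le_sum_abs (fun ξ => k₁ ξ * k₂ (η \ ξ)) η.powerset
    _ ≤ ∑ ξ ∈ η.powerset, f₁ ξ.card * f₂ (η.card - ξ.card) := by
        refine sum_le_sum fun ξ hξ => ?_
        rw [← card_sdiff_of_subset (mem_powerset.mp hξ)]
        exact mul_le_mul (hk₁ ξ) (hk₂ _) (abs_nonneg _) (hf₁ _)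
    _ = _ := by simp only [sum_powerset_apply_card (fun j => f₁ j * f₂ (η.card - j)), nsmul_eq_mul]

theorem conv_young_distinct_general (k1 k2 : Finset X → ℝ) (C1 C2 δ1 δ2 δ M1 M2 : ℝ)
    (hC1 : 0 < C1) (hC2 : 0 < C2) (hC : C1 ≠ C2)
    (hδ : 1 ≤ δ) (hδ1' : δ1 ≤ δ) (hδ2' : δ2 ≤ δ)
    (h1 : ∀ η : Finset X, |k1 η| ≤ M1 * C1 ^ η.card * (η.card.factorial : ℝ) ^ δ1)
    (h2 : ∀ η : Finset X, |k2 η| ≤ M2 * C2 ^ η.card * (η.card.factorial : ℝ) ^ δ2) :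
    ∀ η : Finset X, |conv k1 k2 η| ≤
      (max C1 C2 / |C1 - C2|) * (M1 * M2) * (max C1 C2) ^ η.card
        * (η.card.factorial : ℝ) ^ δ := by
  have hM1 : 0 ≤ M1 := (abs_nonneg _).trans (by simpa using h1 ∅)
  have hM2 : 0 ≤ M2 := (abs_nonneg _).trans (by simpa using h2 ∅)
  intro η
  set n := η.card
  calc |conv k1 k2 η|
      ≤ ∑ j ∈ range (n + 1), (n.choose j : ℝ) * ((M1 * C1 ^ j * (j.factorial : ℝ) ^ δ1)
          * (M2 * C2 ^ (n - j) * ((n - j).factorial : ℝ) ^ δ2)) :=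
        abs_conv_le_sum_choose (f₁ := fun j => M1 * C1 ^ j * (j.factorial : ℝ) ^ δ1)
          (f₂ := fun j => M2 * C2 ^ j * (j.factorial : ℝ) ^ δ2) (fun _ => by positivity) h1 h2 η
    _ ≤ ∑ j ∈ range (n + 1), M1 * M2 * (n.factorial : ℝ) ^ δ * (C1 ^ j * C2 ^ (n - j)) := by
        refine sum_le_sum fun j hj => ?_
        have hjn := choose_mul_factorial_rpow_mul_le (Nat.lt_succ_iff.mp (mem_range.mp hj))
          hδ hδ1' hδ2'
        calc _ = M1 * M2 * (C1 ^ j * C2 ^ (n - j)) * ((n.choose j : ℝ)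
                * ((j.factorial : ℝ) ^ δ1 * ((n - j).factorial : ℝ) ^ δ2)) := by ring
          _ ≤ M1 * M2 * (C1 ^ j * C2 ^ (n - j)) * (n.factorial : ℝ) ^ δ := by gcongr
          _ = _ := by ring
    _ ≤ M1 * M2 * (n.factorial : ℝ) ^ δ * (max C1 C2 ^ (n + 1) / |C1 - C2|) := by
        rw [← mul_sum]
        gcongr
        exact sum_pow_mul_pow_le_max_pow_div hC1.le hC2.le hC n
    _ = _ := by ring

theorem conv_young_distinct (k1 k2 : Finset X → ℝ) (C1 C2 δ1 δ2 δ M1 M2 : ℝ)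
    (hC1 : 0 < C1) (hC2 : 0 < C2) (hC : C1 ≠ C2)
    (hδ1 : 0 ≤ δ1) (hδ2 : 0 ≤ δ2) (hδ : 1 ≤ δ) (hδ1' : δ1 ≤ δ) (hδ2' : δ2 ≤ δ)
    (h1 : ∀ η : Finset X, |k1 η| ≤ M1 * C1 ^ η.card * (η.card.factorial : ℝ) ^ δ1)
    (h2 : ∀ η : Finset X, |k2 η| ≤ M2 * C2 ^ η.card * (η.card.factorial : ℝ) ^ δ2) :
    ∀ η : Finset X, |conv k1 k2 η| ≤
      (max C1 C2 / |C1 - C2|) * (M1 * M2) * (max C1 C2) ^ η.card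
        * (η.card.factorial : ℝ) ^ δ :=
  conv_young_distinct_general k1 k2 C1 C2 δ1 δ2 δ M1 M2 hC1 hC2 hC hδ hδ1' hδ2' h1 h2
end

section
/- If δ ≥ 1, C_1 = C_2 = C, and |k_i(η)| ≤ M_i C^{|η|} (|η|!)^{δ_i} with δ_i ≤ δ, then for any C' > C, |(k1 * k2)(η)| ≤ (C'/(e·C·ln(C'/C))) · M_1 M_2 · (C')^{|η|} (|η|!)^δ for all finite configurations η. -/
open Finset

variable {X : Type*} [DecidableEq X]

open Real Nat

/-! Bounding each summand of the convolution by the hypotheses, the splitting `|η| = j + (|η| - j)`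
turns the powers of `C` into `C ^ |η|`, and `δ ≥ 1` with `j! (|η| - j)! = |η|! / (|η| choose j)`
makes the factorials contribute at most `|η|! ^ δ / (|η| choose j)`. Since there are
`|η| choose j` subsets of size `j`, the sum is at most `(|η| + 1) M₁ M₂ C ^ |η| |η|! ^ δ`, and
`(n + 1) (C / C') ^ n ≤ C' / (e C log (C' / C))` (from `e x ≤ exp x`) trades the factor `|η| + 1`
for the larger base `C'`. -/

theorem abs_conv_le_of_choose_mul_le (k1 k2 : Finset X → ℝ) (f g : ℕ → ℝ)
    (h1 : ∀ ξ : Finset X, |k1 ξ| ≤ f ξ.card) (h2 : ∀ ξ : Finset X, |k2 ξ| ≤ g ξ.card)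
    (η : Finset X) {B : ℝ}
    (hB : ∀ j ≤ η.card, (η.card.choose j : ℝ) * (f j * g (η.card - j)) ≤ B) :
    |conv k1 k2 η| ≤ (η.card + 1) * B := by
  calc |conv k1 k2 η| ≤ ∑ ξ ∈ η.powerset, |k1 ξ| * |k2 (η \ ξ)| := by
        simpa only [conv, abs_mul] using abs_sum_le_sum_abs (fun ξ => k1 ξ * k2 (η \ ξ)) η.powerset
    _ ≤ ∑ ξ ∈ η.powerset, f ξ.card * g (η.card - ξ.card) := sum_le_sum fun ξ hξ => by
        rw [← card_sdiff_of_subset (mem_powerset.1 hξ)]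
        exact mul_le_mul (h1 ξ) (h2 _) (abs_nonneg _) ((abs_nonneg _).trans (h1 ξ))
    _ = ∑ j ∈ range (η.card + 1), (η.card.choose j : ℝ) * (f j * g (η.card - j)) := by
        simp only [sum_powerset_apply_card (fun j => f j * g (η.card - j)), nsmul_eq_mul]
    _ ≤ ∑ j ∈ range (η.card + 1), B :=
        sum_le_sum fun j hj => hB j (Nat.lt_succ_iff.1 (mem_range.1 hj))
    _ = (η.card + 1) * B := by simp

theorem choose_mul_factorial_rpow_mul_factorial_rpow_le {δ1 δ2 δ : ℝ} (hδ : 1 ≤ δ)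
    (hδ1 : δ1 ≤ δ) (hδ2 : δ2 ≤ δ) {j n : ℕ} (hj : j ≤ n) :
    (n.choose j : ℝ) * ((j ! : ℝ) ^ δ1 * ((n - j)! : ℝ) ^ δ2) ≤ (n ! : ℝ) ^ δ := by
  have hchoose : (1 : ℝ) ≤ n.choose j := by exact_mod_cast choose_pos hj
  have hfj : (1 : ℝ) ≤ j ! := by exact_mod_cast j.factorial_pos
  have hfnj : (1 : ℝ) ≤ (n - j)! := by exact_mod_cast (n - j).factorial_pos
  calc (n.choose j : ℝ) * ((j ! : ℝ) ^ δ1 * ((n - j)! : ℝ) ^ δ2)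
      ≤ (n.choose j : ℝ) ^ δ * ((j ! : ℝ) ^ δ * ((n - j)! : ℝ) ^ δ) := by
        gcongr
        exact self_le_rpow_of_one_le hchoose hδ
    _ = (n ! : ℝ) ^ δ := by
        rw [← mul_rpow (by positivity) (by positivity), ← mul_rpow (by positivity) (by positivity),
          ← mul_assoc]
        exact_mod_cast congrArg (fun m : ℕ => (m : ℝ) ^ δ) (choose_mul_factorial_mul_factorial hj)

theorem add_one_mul_pow_le {C C' : ℝ} (hC : 0 < C) (hC' : C < C') (n : ℕ) :
    ((n : ℝ) + 1) * C ^ n ≤ C' / (exp 1 * C * log (C' / C)) * C' ^ n := by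
  have hlog : 0 < log (C' / C) := log_pos ((one_lt_div hC).2 hC')
  have key : exp 1 * (((n : ℝ) + 1) * log (C' / C)) ≤ (C' / C) ^ (n + 1) := by
    calc _ ≤ exp (((n : ℝ) + 1) * log (C' / C)) := exp_one_mul_le_exp
      _ = (C' / C) ^ (n + 1) := by
        rw [← Nat.cast_succ, exp_nat_mul, exp_log (div_pos (hC.trans hC') hC)]
  rw [div_pow, le_div_iff₀ (by positivity)] at key
  rw [div_mul_eq_mul_div, le_div_iff₀ (by positivity)]
  linear_combination key

theorem conv_young_equal_general (k1 k2 : Finset X → ℝ) (C C' δ1 δ2 δ M1 M2 : ℝ)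
    (hC : 0 < C) (hC' : C < C')
    (hδ : 1 ≤ δ) (hδ1' : δ1 ≤ δ) (hδ2' : δ2 ≤ δ)
    (h1 : ∀ η : Finset X, |k1 η| ≤ M1 * C ^ η.card * (η.card.factorial : ℝ) ^ δ1)
    (h2 : ∀ η : Finset X, |k2 η| ≤ M2 * C ^ η.card * (η.card.factorial : ℝ) ^ δ2) :
    ∀ η : Finset X, |conv k1 k2 η| ≤
      (C' / (Real.exp 1 * C * Real.log (C' / C))) * (M1 * M2) * C' ^ η.card
        * (η.card.factorial : ℝ) ^ δ := by
  have hM1 : 0 ≤ M1 := by simpa using (abs_nonneg (k1 ∅)).trans (h1 ∅)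
  have hM2 : 0 ≤ M2 := by simpa using (abs_nonneg (k2 ∅)).trans (h2 ∅)
  intro η
  set n := η.card
  have hterm : ∀ j ≤ n, (n.choose j : ℝ) *
      ((M1 * C ^ j * (j ! : ℝ) ^ δ1) * (M2 * C ^ (n - j) * ((n - j)! : ℝ) ^ δ2))
        ≤ M1 * M2 * C ^ n * (n ! : ℝ) ^ δ := fun j hjn => by
    rw [← pow_mul_pow_sub C hjn]
    calc _ = M1 * M2 * (C ^ j * C ^ (n - j)) *
          ((n.choose j : ℝ) * ((j ! : ℝ) ^ δ1 * ((n - j)! : ℝ) ^ δ2)) := by ring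
      _ ≤ _ := by
        gcongr
        exact choose_mul_factorial_rpow_mul_factorial_rpow_le hδ hδ1' hδ2' hjn
  calc |conv k1 k2 η| ≤ ((n : ℝ) + 1) * (M1 * M2 * C ^ n * (n ! : ℝ) ^ δ) :=
        abs_conv_le_of_choose_mul_le k1 k2 (fun j => M1 * C ^ j * (j ! : ℝ) ^ δ1)
          (fun j => M2 * C ^ j * (j ! : ℝ) ^ δ2) h1 h2 η hterm
    _ = ((n : ℝ) + 1) * C ^ n * (M1 * M2 * (n ! : ℝ) ^ δ) := by ring
    _ ≤ C' / (exp 1 * C * log (C' / C)) * C' ^ n * (M1 * M2 * (n ! : ℝ) ^ δ) := by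
        gcongr ?_ * _
        exact add_one_mul_pow_le hC hC' n
    _ = _ := by ring

theorem conv_young_equal (k1 k2 : Finset X → ℝ) (C C' δ1 δ2 δ M1 M2 : ℝ)
    (hC : 0 < C) (hC' : C < C')
    (hδ1 : 0 ≤ δ1) (hδ2 : 0 ≤ δ2) (hδ : 1 ≤ δ) (hδ1' : δ1 ≤ δ) (hδ2' : δ2 ≤ δ)
    (h1 : ∀ η : Finset X, |k1 η| ≤ M1 * C ^ η.card * (η.card.factorial : ℝ) ^ δ1)
    (h2 : ∀ η : Finset X, |k2 η| ≤ M2 * C ^ η.card * (η.card.factorial : ℝ) ^ δ2) :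
    ∀ η : Finset X, |conv k1 k2 η| ≤
      (C' / (Real.exp 1 * C * Real.log (C' / C))) * (M1 * M2) * C' ^ η.card
        * (η.card.factorial : ℝ) ^ δ :=
  conv_young_equal_general k1 k2 C C' δ1 δ2 δ M1 M2 hC hC' hδ hδ1' hδ2' h1 h2
end

section
/- If |k1(η)| ≤ M_1 C_1^{|η|} (|η|!)^{δ_1} with C_1 > 1, δ_1 ≥ 1, and |k2(η)| ≤ M_2 for all η, then |(k1 * k2)(η)| ≤ (C_1/(C_1 − 1)) · M_1 M_2 · C_1^{|η|} (|η|!)^{δ_1} for all finite configurations η. -/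
/-! Bounding `|k2|` by `M2` leaves the sum of the bound on `k1` over all `ξ ⊆ η`. Grouped by
`j = |ξ|`, each term is `C(n, j) C^j (j!)^δ ≤ C^j (n!)^δ`, because `C(n, j) j! ≤ n!` and
`C(n, j) ≤ C(n, j)^δ` for `δ ≥ 1`; the geometric sum `∑_{j ≤ n} C^j` is at most
`C/(C-1) · C^n`. -/

open Finset

variable {X : Type*} [DecidableEq X]

theorem Nat.choose_mul_factorial_rpow_le {δ : ℝ} (hδ : 1 ≤ δ) {n j : ℕ} (hj : j ≤ n) :
    (n.choose j : ℝ) * (j.factorial : ℝ) ^ δ ≤ (n.factorial : ℝ) ^ δ := by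
  have hprod : n.choose j * j.factorial ≤ n.factorial := by
    rw [← Nat.choose_mul_factorial_mul_factorial hj]
    exact Nat.le_mul_of_pos_right _ (Nat.factorial_pos _)
  have hchoose : (1 : ℝ) ≤ n.choose j := by exact_mod_cast Nat.choose_pos hj
  calc (n.choose j : ℝ) * (j.factorial : ℝ) ^ δ
      ≤ (n.choose j : ℝ) ^ δ * (j.factorial : ℝ) ^ δ := by
        gcongr; exact Real.self_le_rpow_of_one_le hchoose hδ
    _ = ((n.choose j * j.factorial : ℕ) : ℝ) ^ δ := by
        rw [Nat.cast_mul, Real.mul_rpow (by positivity) (by positivity)]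
    _ ≤ (n.factorial : ℝ) ^ δ := by gcongr

theorem geom_sum_range_succ_le_div_sub_one_mul_pow {C : ℝ} (hC : 1 < C) (n : ℕ) :
    ∑ j ∈ range (n + 1), C ^ j ≤ C / (C - 1) * C ^ n := by
  have hC' : 0 < C - 1 := sub_pos.mpr hC
  rw [geom_sum_eq hC.ne', div_mul_eq_mul_div, ← pow_succ']
  gcongr
  linarith

theorem sum_powerset_pow_card_mul_factorial_rpow_le {C δ : ℝ} (hC : 1 < C) (hδ : 1 ≤ δ)
    {α : Type*} (s : Finset α) :
    ∑ ξ ∈ s.powerset, C ^ #ξ * ((#ξ).factorial : ℝ) ^ δ ≤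
      C / (C - 1) * C ^ #s * ((#s).factorial : ℝ) ^ δ := by
  rw [sum_powerset_apply_card (fun m ↦ C ^ m * (m.factorial : ℝ) ^ δ)]
  calc ∑ m ∈ range (#s + 1), (#s).choose m • (C ^ m * (m.factorial : ℝ) ^ δ)
      = ∑ m ∈ range (#s + 1), C ^ m * ((#s).choose m * (m.factorial : ℝ) ^ δ) := by
        refine sum_congr rfl fun m _ ↦ ?_
        rw [nsmul_eq_mul]; ring
    _ ≤ ∑ m ∈ range (#s + 1), C ^ m * ((#s).factorial : ℝ) ^ δ := by
        gcongr with m hm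
        exact Nat.choose_mul_factorial_rpow_le hδ (Nat.lt_succ_iff.mp (mem_range.mp hm))
    _ = (∑ m ∈ range (#s + 1), C ^ m) * ((#s).factorial : ℝ) ^ δ := (sum_mul ..).symm
    _ ≤ C / (C - 1) * C ^ #s * ((#s).factorial : ℝ) ^ δ := by
        gcongr
        exact geom_sum_range_succ_le_div_sub_one_mul_pow hC _

theorem abs_conv_le_mul_sum_abs {k1 k2 : Finset X → ℝ} {M : ℝ} (hk2 : ∀ η, |k2 η| ≤ M)
    (η : Finset X) : |conv k1 k2 η| ≤ M * ∑ ξ ∈ η.powerset, |k1 ξ| := by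
  rw [conv, mul_sum]
  refine (abs_sum_le_sum_abs _ _).trans (sum_le_sum fun ξ _ ↦ ?_)
  rw [abs_mul, mul_comm M]
  exact mul_le_mul_of_nonneg_left (hk2 _) (abs_nonneg _)

theorem conv_young_bounded (k1 k2 : Finset X → ℝ) (C1 δ1 M1 M2 : ℝ)
    (hC1 : 1 < C1) (hδ1 : 1 ≤ δ1)
    (h1 : ∀ η : Finset X, |k1 η| ≤ M1 * C1 ^ η.card * (η.card.factorial : ℝ) ^ δ1)
    (h2 : ∀ η : Finset X, |k2 η| ≤ M2) :
    ∀ η : Finset X, |conv k1 k2 η| ≤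
      (C1 / (C1 - 1)) * (M1 * M2) * C1 ^ η.card * (η.card.factorial : ℝ) ^ δ1 := by
  intro η
  have hM1 : 0 ≤ M1 := by simpa using (abs_nonneg _).trans (h1 ∅)
  have hM2 : 0 ≤ M2 := (abs_nonneg _).trans (h2 ∅)
  calc |conv k1 k2 η|
      ≤ M2 * ∑ ξ ∈ η.powerset, |k1 ξ| := abs_conv_le_mul_sum_abs h2 η
    _ ≤ M2 * ∑ ξ ∈ η.powerset, M1 * (C1 ^ #ξ * ((#ξ).factorial : ℝ) ^ δ1) := by
        gcongr with ξ
        rw [← mul_assoc]; exact h1 ξ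
    _ = M1 * M2 * ∑ ξ ∈ η.powerset, C1 ^ #ξ * ((#ξ).factorial : ℝ) ^ δ1 := by
        rw [← mul_sum]; ring
    _ ≤ M1 * M2 * (C1 / (C1 - 1) * C1 ^ #η * ((#η).factorial : ℝ) ^ δ1) := by
        gcongr
        exact sum_powerset_pow_card_mul_factorial_rpow_le hC1 hδ1 η
    _ = C1 / (C1 - 1) * (M1 * M2) * C1 ^ #η * ((#η).factorial : ℝ) ^ δ1 := by ring
end

section
/- For functions k1, k2 on finite configurations with k1(∅) = k2(∅) = 1, one has ln^*(k1 * k2) = ln^* k1 + ln^* k2, where ln^* k := Σ_{n≥1} ((−1)^{n−1}/n)(k − 1^*)^{*n}. -/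
open Finset

variable {X : Type*} [DecidableEq X]

/-!
With the Ruelle convolution as product, functions on finite configurations form a commutative
`ℝ`-algebra, in which `ln^* k` is the series `log (1 + u)` for `u = k - 1^*`. Restricting to the
subsets of a fixed `η` is an algebra endomorphism that keeps the value at `η` and, since
`u ∅ = 0`, makes `u` nilpotent of order `|η| + 1`; so everything reduces to the identity
`log ((1 + a) (1 + b)) = log (1 + a) + log (1 + b)` for nilpotent `a`, `b` of a commutative
algebra over a field of characteristic zero. For that, put `U = a X` and `V = b X` in `A[X]`:
both sides of the identity with `U`, `V` in place of `a`, `b` vanish at `X = 0` and have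
derivative `U' / (1 + U) + V' / (1 + V)`, so they agree, and evaluating at `X = 1` gives the claim.
-/

section TruncatedLog

open Polynomial

variable (𝕜 : Type*) {A : Type*} [Field 𝕜] [CommRing A] [Algebra 𝕜 A]

noncomputable def truncLog (B : ℕ) (a : A) : A :=
  ∑ n ∈ Icc 1 B, ((-1 : 𝕜) ^ (n - 1) / n) • a ^ n

variable {𝕜}

theorem derivative_truncLog_mul_one_add [CharZero 𝕜] {p : A[X]} {B : ℕ} (hp : p ^ B = 0) :
    derivative (truncLog 𝕜 B p) * (1 + p) = derivative p := by
  have hterm (m : ℕ) : derivative (((-1 : 𝕜) ^ m / ↑(m + 1)) • p ^ (m + 1))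
      = (-p) ^ m * derivative p := by
    have hm : ((m + 1 : ℕ) : 𝕜) ≠ 0 := Nat.cast_ne_zero.mpr m.succ_ne_zero
    rw [derivative_smul, derivative_pow_succ, ← Nat.cast_add_one, map_natCast, mul_assoc,
      ← nsmul_eq_mul, ← Nat.cast_smul_eq_nsmul 𝕜, smul_smul, div_mul_cancel₀ _ hm,
      Algebra.smul_def, map_pow, map_neg, map_one, ← mul_assoc, neg_pow p]
  have hgeom : (∑ m ∈ range B, (-p) ^ m) * (1 + p) = 1 := by
    rw [mul_comm, ← sub_neg_eq_add, mul_neg_geom_sum, neg_pow, hp, mul_zero, sub_zero]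
  rw [truncLog, map_sum, ← Ico_add_one_right_eq_Icc, sum_Ico_eq_sum_range]
  simp only [add_comm 1, Nat.add_sub_cancel, hterm, ← sum_mul]
  rw [mul_right_comm, hgeom, one_mul]

theorem truncLog_zero (B : ℕ) : truncLog 𝕜 B (0 : A) = 0 :=
  sum_eq_zero fun n hn => by rw [zero_pow (by simp at hn; omega), smul_zero]

theorem map_truncLog {A' : Type*} [CommRing A'] [Algebra 𝕜 A'] (f : A →ₐ[𝕜] A') (B : ℕ)
    (a : A) : f (truncLog 𝕜 B a) = truncLog 𝕜 B (f a) := by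
  simp only [truncLog, map_sum, map_smul, map_pow]

theorem truncLog_eq_of_pow_eq_zero {a : A} {N B : ℕ} (ha : a ^ (N + 1) = 0) (hB : N ≤ B) :
    truncLog 𝕜 B a = truncLog 𝕜 N a := by
  refine (sum_subset (Icc_subset_Icc_right hB) fun n hnB hnN => ?_).symm
  rw [pow_eq_zero_of_le (by simp_all) ha, smul_zero]

theorem truncLog_add_add_mul_of_eval_zero [CharZero 𝕜] {U V : A[X]} {B : ℕ}
    (hU : U ^ B = 0) (hV : V ^ B = 0) (hUV : (U + V + U * V) ^ B = 0)
    (hU₀ : U.eval 0 = 0) (hV₀ : V.eval 0 = 0) :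
    truncLog 𝕜 B (U + V + U * V) = truncLog 𝕜 B U + truncLog 𝕜 B V := by
  have hderiv : derivative (truncLog 𝕜 B (U + V + U * V))
      = derivative (truncLog 𝕜 B U + truncLog 𝕜 B V) := by
    refine (IsNilpotent.isUnit_one_add ⟨B, hUV⟩).mul_left_inj.mp ?_
    have hU' := derivative_truncLog_mul_one_add (𝕜 := 𝕜) hU
    have hV' := derivative_truncLog_mul_one_add (𝕜 := 𝕜) hV
    rw [derivative_truncLog_mul_one_add hUV]
    simp only [map_add, derivative_mul]
    linear_combination (-(1 + V)) * hU' - (1 + U) * hV'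
  have heval {p : A[X]} (hp : p.eval 0 = 0) : (truncLog 𝕜 B p).eval 0 = 0 := by
    simpa [hp, truncLog_zero] using map_truncLog ((aeval (0 : A)).restrictScalars 𝕜) B p
  have : IsAddTorsionFree A := .of_isTorsionFree 𝕜 A
  set P := truncLog 𝕜 B (U + V + U * V) - (truncLog 𝕜 B U + truncLog 𝕜 B V)
  have hP : P = C (P.coeff 0) := eq_C_of_derivative_eq_zero (by rw [map_sub, hderiv, sub_self])
  rw [coeff_zero_eq_eval_zero, eval_sub, eval_add, heval hU₀, heval hV₀,
    heval (by simp [hU₀, hV₀]), add_zero, sub_zero, map_zero] at hP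
  exact sub_eq_zero.mp hP

theorem truncLog_add_add_mul [CharZero 𝕜] {a b : A} {N : ℕ} (ha : a ^ (N + 1) = 0)
    (hb : b ^ (N + 1) = 0) (hab : (a + b + a * b) ^ (N + 1) = 0) :
    truncLog 𝕜 N (a + b + a * b) = truncLog 𝕜 N a + truncLog 𝕜 N b := by
  have hX {c : A} (hc : c ^ (N + 1) = 0) {n : ℕ} (hn : N + 1 ≤ n) :
      (C c * Polynomial.X) ^ n = 0 := by
    rw [mul_pow, ← map_pow, pow_eq_zero_of_le hn hc, map_zero, zero_mul]
  set U := C a * Polynomial.X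
  set V := C b * Polynomial.X
  -- In `A[X]`, `U + V + U * V` is only nilpotent of order `2 * N + 1`, hence the longer truncation.
  have hUV : (U + V + U * V) ^ (2 * N + 1) = 0 := by
    rw [show U + V + U * V = U + V * (1 + U) by ring]
    exact (Commute.all _ _).add_pow_eq_zero_of_add_le_succ_of_pow_eq_zero (hX ha le_rfl)
      (by rw [mul_pow, hX hb le_rfl, zero_mul]) (by omega)
  have hpoly := congrArg ((aeval (1 : A)).restrictScalars 𝕜)
    (truncLog_add_add_mul_of_eval_zero (𝕜 := 𝕜) (hX ha (by omega)) (hX hb (by omega)) hUV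
      (by simp) (by simp))
  rw [map_add, map_truncLog, map_truncLog, map_truncLog] at hpoly
  have hle : N ≤ 2 * N + 1 := by omega
  rw [← truncLog_eq_of_pow_eq_zero ha hle, ← truncLog_eq_of_pow_eq_zero hb hle,
    ← truncLog_eq_of_pow_eq_zero hab hle]
  simpa [U, V] using hpoly

end TruncatedLog

theorem conv_comm (f g : Finset X → ℝ) : conv f g = conv g f := by
  funext η
  refine sum_nbij' (η \ ·) (η \ ·) (by simp) (by simp) (fun ξ hξ => ?_) (fun ξ hξ => ?_)
    (fun ξ hξ => ?_) <;> rw [mem_powerset] at hξ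
  · exact Finset.sdiff_sdiff_eq_self hξ
  · exact Finset.sdiff_sdiff_eq_self hξ
  · rw [Finset.sdiff_sdiff_eq_self hξ, mul_comm]

theorem oneStar_conv (f : Finset X → ℝ) : conv oneStar f = f := by
  funext η
  rw [conv, sum_eq_single_of_mem ∅ (empty_mem_powerset η) fun ξ _ hξ => by simp [oneStar, hξ]]
  simp [oneStar]

theorem conv_apply_empty (f g : Finset X → ℝ) : conv f g ∅ = f ∅ * g ∅ := by
  simp [conv]

theorem conv_add (f g h : Finset X → ℝ) : conv f (g + h) = conv f g + conv f h := by
  funext η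
  simp only [conv, Pi.add_apply, mul_add, sum_add_distrib]

theorem add_conv (f g h : Finset X → ℝ) : conv (f + g) h = conv f h + conv g h := by
  rw [conv_comm, conv_add, conv_comm h, conv_comm h]

theorem conv_smul (c : ℝ) (f g : Finset X → ℝ) : conv f (c • g) = c • conv f g := by
  funext η
  simp only [conv, Pi.smul_apply, smul_eq_mul, mul_sum, mul_left_comm]

theorem conv_zero (f : Finset X → ℝ) : conv f 0 = 0 := by
  funext η
  simp [conv]

theorem zero_conv (f : Finset X → ℝ) : conv 0 f = 0 := by
  rw [conv_comm, conv_zero]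

theorem conv_oneStar (f : Finset X → ℝ) : conv f oneStar = f := by
  rw [conv_comm, oneStar_conv]

theorem smul_conv (c : ℝ) (f g : Finset X → ℝ) : conv (c • f) g = c • conv f g := by
  rw [conv_comm, conv_smul, conv_comm]

theorem conv_assoc (f g h : Finset X → ℝ) : conv (conv f g) h = conv f (conv g h) := by
  funext η
  simp only [conv, sum_mul, mul_sum]
  rw [sum_sigma', sum_sigma']
  refine sum_nbij' (fun p => ⟨p.2, p.1 \ p.2⟩) (fun p => ⟨p.1 ∪ p.2, p.1⟩)
    ?_ ?_ ?_ ?_ ?_ <;> rintro ⟨ξ, ζ⟩ hp <;> simp only [mem_sigma, mem_powerset] at hp ⊢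
  · exact ⟨hp.2.trans hp.1, sdiff_subset_sdiff hp.1 le_rfl⟩
  · exact ⟨union_subset hp.1 (hp.2.trans sdiff_subset), subset_union_left⟩
  · simp [union_sdiff_of_subset hp.2]
  · simp [union_sdiff_cancel_left (disjoint_of_subset_right hp.2 disjoint_sdiff)]
  · rw [sdiff_sdiff_sdiff_cancel_right hp.2, mul_assoc]

namespace WithConv

-- `WithConv` keeps the convolution product apart from the pointwise one on `Finset X → ℝ`.
noncomputable instance : CommRing (WithConv (Finset X → ℝ)) :=
  { (inferInstance : AddCommGroup (WithConv (Finset X → ℝ))) with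
    mul u v := toConv (conv u.ofConv v.ofConv)
    one := toConv oneStar
    mul_assoc u v w := congrArg toConv (conv_assoc _ _ _)
    one_mul u := congrArg toConv (oneStar_conv _)
    mul_one u := congrArg toConv (conv_oneStar _)
    left_distrib u v w := congrArg toConv (conv_add _ _ _)
    right_distrib u v w := congrArg toConv (add_conv _ _ _)
    zero_mul u := congrArg toConv (zero_conv _)
    mul_zero u := congrArg toConv (conv_zero _)
    mul_comm u v := congrArg toConv (conv_comm _ _) }

noncomputable instance : Algebra ℝ (WithConv (Finset X → ℝ)) :=
  Algebra.ofModule (fun c _ _ => congrArg toConv (smul_conv c _ _))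
    (fun c _ _ => congrArg toConv (conv_smul c _ _))

theorem ofConv_mul (u v : WithConv (Finset X → ℝ)) : (u * v).ofConv = conv u.ofConv v.ofConv :=
  rfl

theorem ofConv_one : (1 : WithConv (Finset X → ℝ)).ofConv = oneStar := rfl

theorem toConv_convPow (k : Finset X → ℝ) (n : ℕ) : toConv (convPow k n) = toConv k ^ n := by
  induction n with
  | zero => rfl
  | succ n ih => rw [pow_succ', ← ih]; rfl

theorem ofConv_pow_eq_zero_of_card_lt {u : WithConv (Finset X → ℝ)} (hu : u.ofConv ∅ = 0)
    {n : ℕ} {ξ : Finset X} (hξ : ξ.card < n) : (u ^ n).ofConv ξ = 0 := by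
  induction n generalizing ξ with
  | zero => omega
  | succ n ih =>
    rw [pow_succ', ofConv_mul, conv]
    refine sum_eq_zero fun ζ hζ => ?_
    obtain rfl | hζ₀ := eq_or_ne ζ ∅
    · rw [hu, zero_mul]
    · rw [mem_powerset] at hζ
      have : 0 < ζ.card := card_pos.mpr (nonempty_iff_ne_empty.mpr hζ₀)
      have := card_le_card hζ
      rw [ih (by rw [card_sdiff_of_subset hζ]; omega), mul_zero]

noncomputable def restrictPowerset (η : Finset X) :
    WithConv (Finset X → ℝ) →ₐ[ℝ] WithConv (Finset X → ℝ) :=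
  AlgHom.ofLinearMap
    { toFun u := toConv fun ξ => if ξ ⊆ η then u.ofConv ξ else 0
      map_add' u v := by ext ξ; simp only [ofConv_add, Pi.add_apply]; split_ifs <;> simp
      map_smul' c u := by ext ξ; simp only [ofConv_smul, Pi.smul_apply]; split_ifs <;> simp }
    (by
      ext ξ
      simp only [LinearMap.coe_mk, AddHom.coe_mk, ofConv_one, oneStar]
      split_ifs <;> simp_all)
    (fun u v => by
      ext ξ
      simp only [LinearMap.coe_mk, AddHom.coe_mk, ofConv_mul, conv, ite_sum_zero]
      refine sum_congr rfl fun ζ hζ => ?_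
      simp only [ite_zero_mul_ite_zero, ← union_subset_iff,
        union_sdiff_of_subset (mem_powerset.mp hζ)])

theorem ofConv_restrictPowerset (η : Finset X) (u : WithConv (Finset X → ℝ)) (ξ : Finset X) :
    (restrictPowerset η u).ofConv ξ = if ξ ⊆ η then u.ofConv ξ else 0 := rfl

theorem restrictPowerset_pow_card_succ_eq_zero {u : WithConv (Finset X → ℝ)}
    (hu : u.ofConv ∅ = 0) (η : Finset X) : restrictPowerset η u ^ (η.card + 1) = 0 := by
  ext ξ
  rw [← map_pow, ofConv_restrictPowerset]
  split_ifs with h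
  · exact ofConv_pow_eq_zero_of_card_lt hu (Nat.lt_succ_of_le (card_le_card h))
  · rfl

end WithConv

open WithConv in
theorem lnStar_apply_eq_ofConv_truncLog (k : Finset X → ℝ) (η : Finset X) :
    lnStar k η = (truncLog ℝ η.card (restrictPowerset η (toConv k - 1))).ofConv η := by
  rw [← map_truncLog, ofConv_restrictPowerset, if_pos subset_rfl, truncLog, ofConv_sum,
    Finset.sum_apply]
  refine sum_congr rfl fun n _ => ?_
  rw [ofConv_smul, Pi.smul_apply, smul_eq_mul, ← toConv_convPow]
  rfl

theorem lnStar_conv (k1 k2 : Finset X → ℝ) (h1 : k1 ∅ = 1) (h2 : k2 ∅ = 1) :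
    lnStar (conv k1 k2) = lnStar k1 + lnStar k2 := by
  open WithConv in
  funext η
  have hnil {k : Finset X → ℝ} (hk : k ∅ = 1) :
      restrictPowerset η (toConv k - 1) ^ (η.card + 1) = 0 :=
    restrictPowerset_pow_card_succ_eq_zero (by simp [ofConv_one, oneStar, hk]) η
  set u := restrictPowerset η (toConv k1 - 1)
  set v := restrictPowerset η (toConv k2 - 1)
  have huv : restrictPowerset η (toConv (conv k1 k2) - 1) = u + v + u * v := by
    rw [show toConv (conv k1 k2) = toConv k1 * toConv k2 from rfl]
    simp only [u, v, map_sub, map_mul, map_one]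
    ring
  have hw := hnil (k := conv k1 k2) (by rw [conv_apply_empty, h1, h2, one_mul])
  rw [huv] at hw
  rw [Pi.add_apply, lnStar_apply_eq_ofConv_truncLog, lnStar_apply_eq_ofConv_truncLog,
    lnStar_apply_eq_ofConv_truncLog, huv, truncLog_add_add_mul (hnil h1) (hnil h2) hw]
  rfl
end
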